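/- arXiv:math/0605675 — 2 statements merged into one kernel-verified Lean document; each statement's English description precedes it below -/
import Mathlib

section
/- The order of the subgroup H of Sp(4, Z/nZ) consisting of matrices of the form [[1,*,*,*],[0,*,*,*],[0,0,1,0],[0,*,*,*]] equals n^3 · |SL_2(Z/nZ)| = n^6 · ∏_{p|n} (1 - p^{-2}). Consequently the index of Gamma-tilde_1(n) in Sp(4,Z) equals n^4 · ∏_{p|n} (1 - p^{-4}). -/
open Matrix Finset

/-- `J = [[0, I₂], [-I₂, 0]]` in block form, over a ring `R`. -/
def Jmat (R : Type*) [Ring R] : Matrix (Fin 4) (Fin 4) R :=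
  !![0, 0, 1, 0; 0, 0, 0, 1; -1, 0, 0, 0; 0, -1, 0, 0]

/-- `Sp(4, ℤ)`, as a set of 4×4 integer matrices. -/
def Sp4Z : Set (Matrix (Fin 4) (Fin 4) ℤ) := {M | Mᵀ * Jmat ℤ * M = Jmat ℤ}

/-- The subgroup `H` of `Sp(4, ℤ/nℤ)` of matrices of the shape
`[[1,*,*,*],[0,*,*,*],[0,0,1,0],[0,*,*,*]]`. -/
def Hset (n : ℕ) : Set (Matrix (Fin 4) (Fin 4) (ZMod n)) :=
  {M | Mᵀ * Jmat (ZMod n) * M = Jmat (ZMod n) ∧ M 0 0 = 1 ∧ M 2 2 = 1 ∧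
    M 1 0 = 0 ∧ M 2 0 = 0 ∧ M 3 0 = 0 ∧ M 2 1 = 0 ∧ M 2 3 = 0}

/-- `Γ̃₁(n)`: matrices in `Sp(4,ℤ)` reducing mod `n` into `Hset n`. -/
def GammaTilde1 (n : ℕ) : Set (Matrix (Fin 4) (Fin 4) ℤ) :=
  {M ∈ Sp4Z | (n : ℤ) ∣ (M 0 0 - 1) ∧ (n : ℤ) ∣ (M 2 2 - 1) ∧
    (n : ℤ) ∣ M 1 0 ∧ (n : ℤ) ∣ M 2 0 ∧ (n : ℤ) ∣ M 3 0 ∧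
    (n : ℤ) ∣ M 2 1 ∧ (n : ℤ) ∣ M 2 3}

/-- The set of left cosets `g·H` of a subset `H` with `g` running through `G`. -/
def leftCosets (G H : Set (Matrix (Fin 4) (Fin 4) ℤ)) :
    Set (Set (Matrix (Fin 4) (Fin 4) ℤ)) :=
  {C | ∃ g ∈ G, C = {x | ∃ h ∈ H, x = g * h}}

def IsUnimod {m d : ℕ} (v : Fin d → ZMod m) : Prop :=
  ∃ w : Fin d → ZMod m, ∑ i, w i * v i = 1

noncomputable def Ucard (m d : ℕ) : ℕ := Nat.card {v : Fin d → ZMod m // IsUnimod v}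

def dvdValEquiv (p k : ℕ) (hp : 0 < p) (hk : 0 < k) :
    {x : ZMod (p^k) // p ∣ x.val} ≃ Fin (p^(k-1)) where
  toFun x := ⟨x.1.val / p, by
    have hne : NeZero (p^k) := ⟨(pow_pos hp k).ne'⟩
    have h1 : x.1.val < p^k := ZMod.val_lt x.1
    rw [Nat.div_lt_iff_lt_mul hp]
    calc x.1.val < p^k := h1
    _ ≤ p^(k-1) * p := by rw [← pow_succ]; exact Nat.pow_le_pow_right hp (by omega)⟩
  invFun t := ⟨((p * t.1 : ℕ) : ZMod (p^k)), by
    have hne : NeZero (p^k) := ⟨(pow_pos hp k).ne'⟩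
    rw [ZMod.val_cast_of_lt]
    · exact Dvd.intro _ rfl
    · calc p * t.1 < p * p^(k-1) := by
            exact Nat.mul_lt_mul_of_le_of_lt (le_refl p) t.2 hp
      _ = p^k := by rw [← pow_succ']; congr 1; omega⟩
  left_inv x := by
    have hne : NeZero (p^k) := ⟨(pow_pos hp k).ne'⟩
    apply Subtype.ext
    show ((p * (x.1.val / p) : ℕ) : ZMod (p^k)) = x.1
    rw [Nat.mul_div_cancel' x.2]
    simp [ZMod.natCast_val, ZMod.cast_id]
  right_inv t := by
    have hne : NeZero (p^k) := ⟨(pow_pos hp k).ne'⟩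
    apply Fin.ext
    show (((p * t.1 : ℕ) : ZMod (p^k)).val) / p = t.1
    rw [ZMod.val_cast_of_lt, Nat.mul_div_cancel_left _ hp]
    calc p * t.1 < p * p^(k-1) := Nat.mul_lt_mul_of_le_of_lt (le_refl p) t.2 hp
    _ = p^k := by rw [← pow_succ']; congr 1; omega

lemma isUnimod_pp_iff {p k d : ℕ} (hp : p.Prime) (hk : 0 < k) (v : Fin d → ZMod (p^k)) :
    IsUnimod v ↔ ¬ ∀ i, p ∣ (v i).val := by
  haveI : Fact p.Prime := ⟨hp⟩
  haveI : NeZero (p^k) := ⟨(pow_pos hp.pos k).ne'⟩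
  constructor
  · rintro ⟨w, hw⟩ hall
    have hφ : ∀ i, (ZMod.castHom (dvd_pow_self p hk.ne') (ZMod p)) (v i) = 0 := by
      intro i
      have : ((v i).val : ZMod p) = 0 := (ZMod.natCast_eq_zero_iff _ p).mpr (hall i)
      rw [ZMod.castHom_apply, ← ZMod.natCast_val, this]
    have := congrArg (ZMod.castHom (dvd_pow_self p hk.ne') (ZMod p)) hw
    rw [map_sum, _root_.map_one] at this
    simp only [_root_.map_mul, hφ, mul_zero, Finset.sum_const_zero] at this
    exact one_ne_zero this.symm
  · intro h
    push_neg at h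
    obtain ⟨i, hi⟩ := h
    have hco : Nat.Coprime (v i).val (p^k) :=
      Nat.Coprime.pow_right k (Nat.coprime_comm.mp ((Nat.Prime.coprime_iff_not_dvd hp).mpr hi))
    have hu : IsUnit (((v i).val : ZMod (p^k))) := (ZMod.isUnit_iff_coprime _ _).mpr hco
    rw [ZMod.natCast_val, ZMod.cast_id] at hu
    obtain ⟨u, hu⟩ := hu
    refine ⟨fun j => if j = i then (↑u⁻¹ : ZMod (p^k)) else 0, ?_⟩
    rw [Finset.sum_eq_single i]
    · simp [← hu, Units.inv_mul]
    · intro b _ hb; simp [hb]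
    · simp

lemma Ucard_pp (p k d : ℕ) (hp : p.Prime) (hk : 0 < k) :
    Ucard (p^k) d = (p^k)^d - (p^(k-1))^d := by
  classical
  haveI : NeZero (p^k) := ⟨(pow_pos hp.pos k).ne'⟩
  have h1 : Ucard (p^k) d
      = Fintype.card {v : Fin d → ZMod (p^k) // ¬ ∀ i, p ∣ (v i).val} := by
    rw [Ucard, Nat.card_congr (Equiv.subtypeEquivRight (fun v => isUnimod_pp_iff hp hk v)),
      Nat.card_eq_fintype_card]
  rw [h1, Fintype.card_subtype_compl]
  congr 1
  · rw [Fintype.card_fun, ZMod.card, Fintype.card_fin]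
  · rw [← Nat.card_eq_fintype_card,
      Nat.card_congr (Equiv.subtypePiEquivPi (p := fun (_ : Fin d) (x : ZMod (p^k)) => p ∣ x.val)),
      Nat.card_pi]
    have hx : Nat.card {x : ZMod (p^k) // p ∣ x.val} = p^(k-1) := by
      rw [Nat.card_congr (dvdValEquiv p k hp.pos hk), Nat.card_eq_fintype_card, Fintype.card_fin]
    simp only [Finset.prod_const, Finset.card_univ, Fintype.card_fin]
    rw [← Nat.card_eq_fintype_card] at *
    rw [hx]

lemma Ucard_mul (a b d : ℕ) (ha : a ≠ 0) (hb : b ≠ 0) (hab : a.Coprime b) :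
    Ucard (a*b) d = Ucard a d * Ucard b d := by
  have e : ZMod (a*b) ≃+* ZMod a × ZMod b := ZMod.chineseRemainder hab
  let E : (Fin d → ZMod (a*b)) ≃ (Fin d → ZMod a) × (Fin d → ZMod b) :=
    (Equiv.piCongrRight (fun _ => e.toEquiv)).trans
      (Equiv.arrowProdEquivProdArrow _ _ _)
  have fst_sum : ∀ (f : Fin d → ZMod a × ZMod b), (∑ i, f i).1 = ∑ i, (f i).1 :=
    fun f => map_sum (AddMonoidHom.fst (ZMod a) (ZMod b)) f Finset.univ
  have snd_sum : ∀ (f : Fin d → ZMod a × ZMod b), (∑ i, f i).2 = ∑ i, (f i).2 :=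
    fun f => map_sum (AddMonoidHom.snd (ZMod a) (ZMod b)) f Finset.univ
  have key : ∀ v : Fin d → ZMod (a*b),
      IsUnimod v ↔ IsUnimod (E v).1 ∧ IsUnimod (E v).2 := by
    intro v
    constructor
    · rintro ⟨w, hw⟩
      constructor
      · refine ⟨fun i => (e (w i)).1, ?_⟩
        have := congrArg (e : ZMod (a*b) →+* ZMod a × ZMod b) hw
        rw [map_sum, _root_.map_one] at this
        have h2 := congrArg Prod.fst this
        rw [fst_sum] at h2
        simpa [E, _root_.map_mul] using h2
      · refine ⟨fun i => (e (w i)).2, ?_⟩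
        have := congrArg (e : ZMod (a*b) →+* ZMod a × ZMod b) hw
        rw [map_sum, _root_.map_one] at this
        have h2 := congrArg Prod.snd this
        rw [snd_sum] at h2
        simpa [E, _root_.map_mul] using h2
    · rintro ⟨⟨w1, hw1⟩, ⟨w2, hw2⟩⟩
      refine ⟨fun i => e.symm (w1 i, w2 i), ?_⟩
      apply e.injective
      rw [map_sum, _root_.map_one]
      have : ∀ i, e (e.symm (w1 i, w2 i) * v i) = (w1 i * (e (v i)).1, w2 i * (e (v i)).2) := by
        intro i
        rw [_root_.map_mul, RingEquiv.apply_symm_apply]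
        rfl
      rw [Finset.sum_congr rfl (fun i _ => this i)]
      rw [Prod.ext_iff]
      constructor
      · rw [fst_sum]
        simpa [E] using hw1
      · rw [snd_sum]
        simpa [E] using hw2
  have E2 : {v : Fin d → ZMod (a*b) // IsUnimod v}
      ≃ {v : Fin d → ZMod a // IsUnimod v} × {v : Fin d → ZMod b // IsUnimod v} :=
    ((E.subtypeEquiv (by intro v; exact key v)).trans (Equiv.subtypeProdEquivProd))
  rw [Ucard, Nat.card_congr E2, Nat.card_prod, Ucard, Ucard]

lemma Ucard_one (d : ℕ) : Ucard 1 d = 1 := by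
  haveI : Unique {v : Fin d → ZMod 1 // IsUnimod v} := by
    refine ⟨⟨⟨fun _ => 0, ⟨fun _ => 0, Subsingleton.elim _ _⟩⟩⟩, ?_⟩
    intro v
    apply Subtype.ext
    funext i
    exact Subsingleton.elim _ _
  rw [Ucard, Nat.card_unique]

lemma Ucard_eq (d : ℕ) (n : ℕ) (hn : 0 < n) :
    (Ucard n d : ℚ) = (n:ℚ)^d * ∏ p ∈ n.primeFactors, (1 - ((p:ℚ))⁻¹ ^ d) := by
  induction n using Nat.recOnPosPrimePosCoprime with
  | prime_pow p k hp hk =>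
      have hp' : p.Prime := hp
      rw [Ucard_pp p k d hp' hk, Nat.primeFactors_prime_pow hk.ne' hp']
      rw [Finset.prod_singleton]
      have hle : (p^(k-1))^d ≤ (p^k)^d :=
        Nat.pow_le_pow_left (Nat.pow_le_pow_right hp'.pos (by omega)) d
      rw [Nat.cast_sub hle]
      have hp0 : (p:ℚ) ≠ 0 := Nat.cast_ne_zero.mpr hp'.pos.ne'
      have key : ((p:ℚ)^(k-1))^d * (p:ℚ)^d = ((p:ℚ)^k)^d := by
        rw [← pow_mul, ← pow_mul, ← pow_add]
        congr 1
        cases k with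
        | zero => omega
        | succ k' => simp [Nat.succ_sub_one]; ring
      push_cast
      rw [mul_sub, mul_one, inv_pow]
      congr 1
      rw [← div_eq_mul_inv, eq_div_iff (by positivity : ((p:ℚ))^d ≠ 0)]
      exact key
  | zero => exact absurd hn (by omega)
  | one => simp [Ucard_one]
  | coprime a b ha hb hab iha ihb =>
      rw [Ucard_mul a b d (by omega) (by omega) hab,
        Nat.Coprime.primeFactors_mul hab,
        Finset.prod_union hab.disjoint_primeFactors]
      push_cast
      rw [iha (by omega), ihb (by omega)]
      ring

section SL2
variable {m : ℕ}

noncomputable def sl2pi (M : Matrix.SpecialLinearGroup (Fin 2) (ZMod m)) :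
    {u : Fin 2 → ZMod m // IsUnimod u} :=
  ⟨fun i => M.1 0 i, by
    refine ⟨![M.1 1 1, -(M.1 1 0)], ?_⟩
    have hdet := M.2
    rw [Matrix.det_fin_two] at hdet
    rw [Fin.sum_univ_two]
    simp only [Matrix.cons_val_zero, Matrix.cons_val_one, Matrix.head_cons]
    linear_combination hdet⟩

noncomputable def sl2FiberEquiv (u : {u : Fin 2 → ZMod m // IsUnimod u}) :
    {M : Matrix.SpecialLinearGroup (Fin 2) (ZMod m) // sl2pi M = u} ≃ ZMod m where
  toFun Mh := u.2.choose 0 * (Mh.1.1 1 0 + u.2.choose 1)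
      + u.2.choose 1 * (Mh.1.1 1 1 - u.2.choose 0)
  invFun t := by
    refine ⟨⟨!![u.1 0, u.1 1; -(u.2.choose 1) + t * u.1 0, u.2.choose 0 + t * u.1 1], ?_⟩, ?_⟩
    · have hw := u.2.choose_spec
      rw [Fin.sum_univ_two] at hw
      rw [Matrix.det_fin_two_of]
      linear_combination hw
    · apply Subtype.ext
      funext i
      fin_cases i <;> simp [sl2pi]
  right_inv t := by
    have hw := u.2.choose_spec
    rw [Fin.sum_univ_two] at hw
    simp only [Matrix.of_apply, Matrix.cons_val', Matrix.cons_val_zero, Matrix.cons_val_one, Matrix.head_cons, Matrix.empty_val', Matrix.cons_val_fin_one, Matrix.head_fin_const, Fin.mk_zero, Fin.mk_one]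
    linear_combination t * hw
  left_inv Mh := by
    have hw := u.2.choose_spec
    rw [Fin.sum_univ_two] at hw
    have hu := Mh.2
    rw [Subtype.ext_iff] at hu
    have hu0 : Mh.1.1 0 0 = u.1 0 := congrFun hu 0
    have hu1 : Mh.1.1 0 1 = u.1 1 := congrFun hu 1
    have hdet := Mh.1.2
    rw [Matrix.det_fin_two, hu0, hu1] at hdet
    apply Subtype.ext
    apply Subtype.ext
    apply Matrix.ext
    intro i j
    fin_cases i <;> fin_cases j <;>
      simp only [Matrix.of_apply, Matrix.cons_val', Matrix.cons_val_zero, Matrix.cons_val_one, Matrix.head_cons, Matrix.empty_val', Matrix.cons_val_fin_one, Matrix.head_fin_const, Fin.mk_zero, Fin.mk_one]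
    · exact hu0.symm
    · exact hu1.symm
    · linear_combination Mh.1.1 1 0 * hw + u.2.choose 1 * hdet
    · linear_combination Mh.1.1 1 1 * hw - u.2.choose 0 * hdet

lemma card_SL2 (hm : 0 < m) :
    Nat.card (Matrix.SpecialLinearGroup (Fin 2) (ZMod m)) = Ucard m 2 * m := by
  classical
  haveI : NeZero m := ⟨hm.ne'⟩
  rw [Nat.card_congr (Equiv.sigmaFiberEquiv (sl2pi (m := m))).symm]
  rw [Nat.card_eq_fintype_card, Fintype.card_sigma]
  have h1 : ∀ u : {u : Fin 2 → ZMod m // IsUnimod u},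
      Fintype.card {M : Matrix.SpecialLinearGroup (Fin 2) (ZMod m) // sl2pi M = u} = m := by
    intro u
    rw [← Nat.card_eq_fintype_card, Nat.card_congr (sl2FiberEquiv u), Nat.card_zmod]
  rw [Finset.sum_congr rfl (fun u _ => h1 u), Finset.sum_const, Finset.card_univ, smul_eq_mul,
    Ucard, Nat.card_eq_fintype_card]
end SL2

section HsetEquiv
variable {n : ℕ}

lemma mulJmul_apply {R : Type*} [CommRing R] (M : Matrix (Fin 4) (Fin 4) R) (i j : Fin 4) :
    (Mᵀ * Jmat R * M) i j
      = M 0 i * M 2 j + M 1 i * M 3 j - M 2 i * M 0 j - M 3 i * M 1 j := by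
  simp [Matrix.mul_apply, Fin.sum_univ_four, Jmat]
  ring

lemma sympl_iff {R : Type*} [CommRing R] (M : Matrix (Fin 4) (Fin 4) R) :
    Mᵀ * Jmat R * M = Jmat R ↔ ∀ i j,
      M 0 i * M 2 j + M 1 i * M 3 j - M 2 i * M 0 j - M 3 i * M 1 j = Jmat R i j := by
  constructor
  · intro h i j
    rw [← mulJmul_apply, h]
  · intro h
    apply Matrix.ext
    intro i j
    rw [mulJmul_apply]
    exact h i j

lemma sympl_entry {R : Type*} [CommRing R] {M : Matrix (Fin 4) (Fin 4) R}
    (h : Mᵀ * Jmat R * M = Jmat R) (i j : Fin 4) :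
    M 0 i * M 2 j + M 1 i * M 3 j - M 2 i * M 0 j - M 3 i * M 1 j = Jmat R i j :=
  (sympl_iff M).mp h i j

set_option maxHeartbeats 1600000 in
lemma invFun_sympl {R : Type*} [CommRing R] (b e f p q r s : R) (hA : p * s - q * r = 1) :
    (!![1, r * e - p * f, b, e * s - f * q;
        0, p, e, q;
        0, 0, 1, 0;
        0, r, f, s])ᵀ * Jmat R * (!![1, r * e - p * f, b, e * s - f * q;
        0, p, e, q;
        0, 0, 1, 0;
        0, r, f, s]) = Jmat R := by
  rw [sympl_iff]
  intro i j
  fin_cases i <;> fin_cases j <;>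
    simp [Jmat, Matrix.vecHead, Matrix.vecTail] <;>
    first
      | ring1
      | linear_combination hA
      | linear_combination -hA

set_option maxHeartbeats 1600000 in
noncomputable def hsetEquiv (n : ℕ) : Hset n ≃
    ((ZMod n × ZMod n × ZMod n) × Matrix.SpecialLinearGroup (Fin 2) (ZMod n)) where
  toFun M := ((M.1 0 2, M.1 1 2, M.1 3 2),
    ⟨!![M.1 1 1, M.1 1 3; M.1 3 1, M.1 3 3], by
      obtain ⟨hs, h00, h22, h10, h20, h30, h21, h23⟩ := M.2
      have h13 := sympl_entry hs 1 3
      rw [Matrix.det_fin_two_of]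
      simp [Jmat, h21, h23] at h13
      linear_combination h13⟩)
  invFun x := ⟨!![1, x.2.1 1 0 * x.1.2.1 - x.2.1 0 0 * x.1.2.2,
                  x.1.1, x.1.2.1 * x.2.1 1 1 - x.1.2.2 * x.2.1 0 1;
                  0, x.2.1 0 0, x.1.2.1, x.2.1 0 1;
                  0, 0, 1, 0;
                  0, x.2.1 1 0, x.1.2.2, x.2.1 1 1],
    ⟨invFun_sympl x.1.1 x.1.2.1 x.1.2.2 (x.2.1 0 0) (x.2.1 0 1) (x.2.1 1 0) (x.2.1 1 1)
      (by have hA := x.2.2; rwa [Matrix.det_fin_two] at hA),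
     rfl, rfl, rfl, rfl, rfl, rfl, rfl⟩⟩
  left_inv M := by
    obtain ⟨hs, h00, h22, h10, h20, h30, h21, h23⟩ := M.2
    have h12 := sympl_entry hs 1 2
    have h23' := sympl_entry hs 2 3
    simp [Jmat, h21, h22, h23, h20] at h12 h23'
    clear hs
    apply Subtype.ext
    apply Matrix.ext
    intro i j
    fin_cases i <;> fin_cases j <;> simp [Matrix.vecHead, Matrix.vecTail]
    · exact h00.symm
    · linear_combination -h12
    · linear_combination h23'
    · exact h10.symm
    · exact h20.symm
    · exact h21.symm
    · exact h22.symm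
    · exact h23.symm
    · exact h30.symm
  right_inv x := by
    obtain ⟨⟨b, e, f⟩, A⟩ := x
    refine Prod.ext ?_ ?_
    · simp
    · apply Subtype.ext
      apply Matrix.ext
      intro i j
      fin_cases i <;> fin_cases j <;> simp [Matrix.vecHead, Matrix.vecTail]

lemma card_Hset_eq (n : ℕ) (hn : 0 < n) :
    Nat.card (Hset n) = n^3 * Nat.card (Matrix.SpecialLinearGroup (Fin 2) (ZMod n)) := by
  rw [Nat.card_congr (hsetEquiv n), Nat.card_prod, Nat.card_prod, Nat.card_prod,
    Nat.card_zmod]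
  ring
end HsetEquiv

section SpBasic

lemma Jmat_mul_Jmat (R : Type*) [CommRing R] : Jmat R * Jmat R = -1 := by
  apply Matrix.ext
  intro i j
  fin_cases i <;> fin_cases j <;>
    simp [Jmat, Matrix.mul_apply, Fin.sum_univ_four, Matrix.one_apply,
      Matrix.vecHead, Matrix.vecTail]

def spInv (M : Matrix (Fin 4) (Fin 4) ℤ) : Matrix (Fin 4) (Fin 4) ℤ :=
  -(Jmat ℤ) * Mᵀ * Jmat ℤ

lemma spInv_mul {M : Matrix (Fin 4) (Fin 4) ℤ} (h : M ∈ Sp4Z) : spInv M * M = 1 := by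
  have : spInv M * M = -(Jmat ℤ) * (Mᵀ * Jmat ℤ * M) := by
    simp [spInv, Matrix.mul_assoc]
  rw [this, h, Matrix.neg_mul, Jmat_mul_Jmat, neg_neg]

lemma mul_spInv {M : Matrix (Fin 4) (Fin 4) ℤ} (h : M ∈ Sp4Z) : M * spInv M = 1 :=
  mul_eq_one_comm.mpr (spInv_mul h)

lemma Sp4Z_one : (1 : Matrix (Fin 4) (Fin 4) ℤ) ∈ Sp4Z := by
  simp [Sp4Z]

lemma Sp4Z_mul {M N : Matrix (Fin 4) (Fin 4) ℤ} (hM : M ∈ Sp4Z) (hN : N ∈ Sp4Z) :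
    M * N ∈ Sp4Z := by
  show (M * N)ᵀ * Jmat ℤ * (M * N) = Jmat ℤ
  rw [Matrix.transpose_mul]
  calc Nᵀ * Mᵀ * Jmat ℤ * (M * N) = Nᵀ * (Mᵀ * Jmat ℤ * M) * N := by
        simp [Matrix.mul_assoc]
  _ = Nᵀ * Jmat ℤ * N := by rw [hM]
  _ = Jmat ℤ := hN

lemma Sp4Z_spInv {M : Matrix (Fin 4) (Fin 4) ℤ} (hM : M ∈ Sp4Z) : spInv M ∈ Sp4Z := by
  show (spInv M)ᵀ * Jmat ℤ * (spInv M) = Jmat ℤ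
  conv_lhs => rw [← hM]
  calc (spInv M)ᵀ * (Mᵀ * Jmat ℤ * M) * spInv M
      = (M * spInv M)ᵀ * Jmat ℤ * (M * spInv M) := by
        rw [Matrix.transpose_mul]; simp [Matrix.mul_assoc]
  _ = Jmat ℤ := by rw [mul_spInv hM]; simp

end SpBasic

section Embeddings

set_option maxHeartbeats 1600000 in
lemma E02_sympl {p q r s : ℤ} (h : p * s - q * r = 1) :
    (!![p, 0, q, 0; 0, 1, 0, 0; r, 0, s, 0; 0, 0, 0, 1]) ∈ Sp4Z := by
  show _ ∈ Sp4Z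
  rw [Sp4Z, Set.mem_setOf_eq, sympl_iff]
  intro i j
  fin_cases i <;> fin_cases j <;>
    simp [Jmat, Matrix.vecHead, Matrix.vecTail] <;>
    first
      | ring1
      | linear_combination h
      | linear_combination -h

set_option maxHeartbeats 1600000 in
lemma E13_sympl {p q r s : ℤ} (h : p * s - q * r = 1) :
    (!![1, 0, 0, 0; 0, p, 0, q; 0, 0, 1, 0; 0, r, 0, s]) ∈ Sp4Z := by
  rw [Sp4Z, Set.mem_setOf_eq, sympl_iff]
  intro i j
  fin_cases i <;> fin_cases j <;>
    simp [Jmat, Matrix.vecHead, Matrix.vecTail] <;>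
    first
      | ring1
      | linear_combination h
      | linear_combination -h

set_option maxHeartbeats 1600000 in
lemma Dblock_sympl {p q r s : ℤ} (h : p * s - q * r = 1) :
    (!![p, q, 0, 0; r, s, 0, 0; 0, 0, s, -r; 0, 0, -q, p]) ∈ Sp4Z := by
  rw [Sp4Z, Set.mem_setOf_eq, sympl_iff]
  intro i j
  fin_cases i <;> fin_cases j <;>
    simp [Jmat, Matrix.vecHead, Matrix.vecTail] <;>
    first
      | ring1
      | linear_combination h
      | linear_combination -h

lemma E02_mulVec (p q r s : ℤ) (a : Fin 4 → ℤ) :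
    (!![p, 0, q, 0; 0, 1, 0, 0; r, 0, s, 0; 0, 0, 0, 1]) *ᵥ a
      = ![p * a 0 + q * a 2, a 1, r * a 0 + s * a 2, a 3] := by
  funext i
  fin_cases i <;>
    simp [Matrix.mulVec, dotProduct, Fin.sum_univ_four, Matrix.vecHead, Matrix.vecTail] <;>
    ring

lemma E13_mulVec (p q r s : ℤ) (a : Fin 4 → ℤ) :
    (!![1, 0, 0, 0; 0, p, 0, q; 0, 0, 1, 0; 0, r, 0, s]) *ᵥ a
      = ![a 0, p * a 1 + q * a 3, a 2, r * a 1 + s * a 3] := by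
  funext i
  fin_cases i <;>
    simp [Matrix.mulVec, dotProduct, Fin.sum_univ_four, Matrix.vecHead, Matrix.vecTail] <;>
    ring

lemma Dblock_mulVec (p q r s : ℤ) (a : Fin 4 → ℤ) :
    (!![p, q, 0, 0; r, s, 0, 0; 0, 0, s, -r; 0, 0, -q, p]) *ᵥ a
      = ![p * a 0 + q * a 1, r * a 0 + s * a 1, s * a 2 - r * a 3, -(q * a 2) + p * a 3] := by
  funext i
  fin_cases i <;>
    simp [Matrix.mulVec, dotProduct, Fin.sum_univ_four, Matrix.vecHead, Matrix.vecTail] <;>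
    ring

end Embeddings

lemma sl2_euclid (a c : ℤ) :
    ∃ p q r s : ℤ, p * s - q * r = 1 ∧ p * a + q * c = Int.gcd a c ∧ r * a + s * c = 0 := by
  by_cases hg : Int.gcd a c = 0
  · have h1 : a = 0 := ((Int.gcd_eq_zero_iff).mp hg).1
    have h2 : c = 0 := ((Int.gcd_eq_zero_iff).mp hg).2
    exact ⟨1, 0, 0, 1, by ring, by simp [h1, h2, hg], by simp [h1, h2]⟩
  · obtain ⟨a', ha'⟩ : (Int.gcd a c : ℤ) ∣ a := Int.gcd_dvd_left a c
    obtain ⟨c', hc'⟩ : (Int.gcd a c : ℤ) ∣ c := Int.gcd_dvd_right a c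
    have hbez : (Int.gcd a c : ℤ) = a * Int.gcdA a c + c * Int.gcdB a c := Int.gcd_eq_gcd_ab a c
    have hgz : (Int.gcd a c : ℤ) ≠ 0 := by exact_mod_cast hg
    refine ⟨Int.gcdA a c, Int.gcdB a c, -c', a', ?_, by linarith, ?_⟩
    · have key : (Int.gcd a c : ℤ) * (Int.gcdA a c * a' - Int.gcdB a c * (-c'))
          = (Int.gcd a c : ℤ) * 1 := by
        linear_combination (-1 : ℤ) * hbez - Int.gcdA a c * ha' - Int.gcdB a c * hc'
      exact mul_left_cancel₀ hgz key
    · linear_combination (-c') * ha' + a' * hc'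

section Lifting

lemma adjust_coprime (a m nn : ℕ) (hm : m ≠ 0)
    (h : Nat.gcd (Nat.gcd a m) nn = 1) :
    ∃ t : ℕ, Nat.Coprime (a + t * nn) m := by
  classical
  refine ⟨∏ p ∈ m.primeFactors.filter (fun p => ¬ p ∣ a), p, ?_⟩
  set t := ∏ p ∈ m.primeFactors.filter (fun p => ¬ p ∣ a), p with ht
  by_contra hc
  obtain ⟨p, hp, hpd, hpm⟩ := Nat.Prime.not_coprime_iff_dvd.mp hc
  by_cases hpa : p ∣ a
  · have htnn : p ∣ t * nn := by
      have := Nat.dvd_sub hpd hpa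
      simpa using this
    rcases (Nat.Prime.dvd_mul hp).mp htnn with hpt | hpnn
    · obtain ⟨q, hq, hpq⟩ := (Prime.dvd_finset_prod_iff hp.prime _).mp hpt
      have hqmem := Finset.mem_filter.mp hq
      have hqprime : q.Prime := Nat.prime_of_mem_primeFactors hqmem.1
      have : p = q := (Nat.prime_dvd_prime_iff_eq hp hqprime).mp hpq
      exact hqmem.2 (this ▸ hpa)
    · have : p ∣ 1 := h ▸ Nat.dvd_gcd (Nat.dvd_gcd hpa hpm) hpnn
      exact hp.one_lt.ne' (Nat.dvd_one.mp this)
  · have hpfil : p ∈ m.primeFactors.filter (fun p => ¬ p ∣ a) :=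
      Finset.mem_filter.mpr ⟨Nat.mem_primeFactors.mpr ⟨hp, hpm, hm⟩, hpa⟩
    have hpt : p ∣ t := Finset.dvd_prod_of_mem _ hpfil
    have : p ∣ a := by
      have h2 := Nat.dvd_sub hpd (hpt.mul_right nn)
      simpa using h2
    exact hpa this

lemma lift_unimodular (n : ℕ) (hn : 0 < n) (v : Fin 4 → ZMod n)
    (hv : ∃ w : Fin 4 → ZMod n, ∑ i, w i * v i = 1) :
    ∃ a : Fin 4 → ℕ, (∀ i, ((a i : ℕ) : ZMod n) = v i) ∧
      Nat.gcd (Nat.gcd (a 0) (a 2)) (Nat.gcd (a 1) (a 3)) = 1 := by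
  haveI : NeZero n := ⟨hn.ne'⟩
  obtain ⟨w, hw⟩ := hv
  set b : Fin 4 → ℕ := fun i => (v i).val with hb
  have hbv : ∀ i, ((b i : ℕ) : ZMod n) = v i := by
    intro i
    simp [hb, ZMod.natCast_val, ZMod.cast_id]
  set c : Fin 4 → ℕ := ![b 0, b 1 + n, b 2, b 3] with hc
  have hcv : ∀ i, ((c i : ℕ) : ZMod n) = v i := by
    intro i
    fin_cases i <;> simp [hc, hbv, ZMod.natCast_self]
  set m : ℕ := Nat.gcd (c 1) (Nat.gcd (c 2) (c 3)) with hm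
  have hmne : m ≠ 0 := by
    intro h0
    have : c 1 = 0 := by
      have := Nat.gcd_eq_zero_iff.mp (hm ▸ h0)
      exact this.1
    simp [hc] at this
    omega
  have hkey : Nat.gcd (Nat.gcd (c 0) m) n = 1 := by
    set G := Nat.gcd (Nat.gcd (c 0) m) n with hG
    have hGn : G ∣ n := Nat.gcd_dvd_right _ _
    have hGc : ∀ i, G ∣ c i := by
      intro i
      fin_cases i
      · exact dvd_trans (Nat.gcd_dvd_left _ _) (Nat.gcd_dvd_left _ _)
      · exact dvd_trans (Nat.gcd_dvd_left _ _)
          (dvd_trans (Nat.gcd_dvd_right _ _) (Nat.gcd_dvd_left _ _))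
      · exact dvd_trans (Nat.gcd_dvd_left _ _)
          (dvd_trans (Nat.gcd_dvd_right _ _)
            (dvd_trans (Nat.gcd_dvd_right _ _) (Nat.gcd_dvd_left _ _)))
      · exact dvd_trans (Nat.gcd_dvd_left _ _)
          (dvd_trans (Nat.gcd_dvd_right _ _)
            (dvd_trans (Nat.gcd_dvd_right _ _) (Nat.gcd_dvd_right _ _)))
    set S : ℕ := ∑ i, (w i).val * c i with hS
    have hS1 : ((S : ℕ) : ZMod n) = ((1 : ℕ) : ZMod n) := by
      push_cast [hS]
      have : ∀ i : Fin 4, (((w i).val : ZMod n) * ((c i : ℕ) : ZMod n)) = w i * v i := by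
        intro i
        rw [hcv i, ZMod.natCast_val, ZMod.cast_id]
      rw [Fin.sum_univ_four] at hw ⊢
      rw [this 0, this 1, this 2, this 3]
      rw [hw]
    have hmod : S ≡ 1 [MOD n] := (ZMod.natCast_eq_natCast_iff _ _ _).mp hS1
    have hdvd : (n : ℤ) ∣ (1 : ℤ) - (S : ℤ) := hmod.dvd
    have hGS : (G : ℤ) ∣ (S : ℤ) := by
      have : G ∣ S := by
        apply Finset.dvd_sum
        intro i _
        exact ((hGc i).mul_left _)
      exact_mod_cast this
    have hG1 : (G : ℤ) ∣ (1 : ℤ) := by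
      have hGn' : (G : ℤ) ∣ ((n : ℕ) : ℤ) := by exact_mod_cast hGn
      have := dvd_add (hGn'.trans hdvd) hGS
      simpa using this
    have : G ∣ 1 := by exact_mod_cast hG1
    exact Nat.dvd_one.mp this
  obtain ⟨t, ht⟩ := adjust_coprime (c 0) m n hmne hkey
  refine ⟨![c 0 + t * n, c 1, c 2, c 3], ?_, ?_⟩
  · intro i
    fin_cases i
    · push_cast [ZMod.natCast_self]
      simpa using hcv 0
    · exact hcv 1
    · exact hcv 2
    · exact hcv 3
  · set a : Fin 4 → ℕ := ![c 0 + t * n, c 1, c 2, c 3] with ha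
    have ha0 : a 0 = c 0 + t * n := rfl
    have ha1 : a 1 = c 1 := rfl
    have ha2 : a 2 = c 2 := rfl
    have ha3 : a 3 = c 3 := rfl
    set d : ℕ := Nat.gcd (Nat.gcd (a 0) (a 2)) (Nat.gcd (a 1) (a 3)) with hd
    have hd0 : d ∣ a 0 := dvd_trans (Nat.gcd_dvd_left _ _) (Nat.gcd_dvd_left _ _)
    have hd2 : d ∣ a 2 := dvd_trans (Nat.gcd_dvd_left _ _) (Nat.gcd_dvd_right _ _)
    have hd1 : d ∣ a 1 := dvd_trans (Nat.gcd_dvd_right _ _) (Nat.gcd_dvd_left _ _)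
    have hd3 : d ∣ a 3 := dvd_trans (Nat.gcd_dvd_right _ _) (Nat.gcd_dvd_right _ _)
    have : d ∣ Nat.gcd (a 0) m :=
      Nat.dvd_gcd hd0 (by
        rw [hm]
        exact Nat.dvd_gcd (ha1 ▸ hd1) (Nat.dvd_gcd (ha2 ▸ hd2) (ha3 ▸ hd3)))
    rw [ha0] at this
    exact Nat.dvd_one.mp (ht ▸ this)

end Lifting

lemma exists_sp_lift (n : ℕ) (hn : 0 < n) (v : Fin 4 → ZMod n)
    (hv : ∃ w : Fin 4 → ZMod n, ∑ i, w i * v i = 1) :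
    ∃ g ∈ Sp4Z, ∀ i, ((g i 0 : ℤ) : ZMod n) = v i := by
  obtain ⟨a, hcast, hgcd⟩ := lift_unimodular n hn v hv
  set A : Fin 4 → ℤ := fun i => (a i : ℤ) with hA
  obtain ⟨p1, q1, r1, s1, hd1, hg1, hz1⟩ := sl2_euclid (A 0) (A 2)
  obtain ⟨p2, q2, r2, s2, hd2, hg2, hz2⟩ := sl2_euclid (A 1) (A 3)
  obtain ⟨p3, q3, r3, s3, hd3, hg3, hz3⟩ :=
    sl2_euclid (Int.gcd (A 0) (A 2)) (Int.gcd (A 1) (A 3))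
  have hG : Int.gcd ((Int.gcd (A 0) (A 2) : ℤ)) ((Int.gcd (A 1) (A 3) : ℤ)) = 1 := by
    simp only [hA, Int.gcd_natCast_natCast]
    exact hgcd
  rw [hG] at hg3
  set M1 : Matrix (Fin 4) (Fin 4) ℤ := !![p1, 0, q1, 0; 0, 1, 0, 0; r1, 0, s1, 0; 0, 0, 0, 1]
    with hM1
  set M2 : Matrix (Fin 4) (Fin 4) ℤ := !![1, 0, 0, 0; 0, p2, 0, q2; 0, 0, 1, 0; 0, r2, 0, s2]
    with hM2
  set M3 : Matrix (Fin 4) (Fin 4) ℤ := !![p3, q3, 0, 0; r3, s3, 0, 0; 0, 0, s3, -r3; 0, 0, -q3, p3]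
    with hM3
  set N : Matrix (Fin 4) (Fin 4) ℤ := M3 * (M2 * M1) with hN
  have hNsp : N ∈ Sp4Z := Sp4Z_mul (Dblock_sympl hd3) (Sp4Z_mul (E13_sympl hd2) (E02_sympl hd1))
  have step1 : M1 *ᵥ A = ![(Int.gcd (A 0) (A 2) : ℤ), A 1, 0, A 3] := by
    rw [hM1, E02_mulVec]
    funext i
    fin_cases i <;> simp [hg1, hz1]
  have step2 : M2 *ᵥ ![(Int.gcd (A 0) (A 2) : ℤ), A 1, 0, A 3]
      = ![(Int.gcd (A 0) (A 2) : ℤ), (Int.gcd (A 1) (A 3) : ℤ), 0, 0] := by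
    rw [hM2, E13_mulVec]
    funext i
    fin_cases i <;> simp [hg2, hz2]
  have step3 : M3 *ᵥ ![(Int.gcd (A 0) (A 2) : ℤ), (Int.gcd (A 1) (A 3) : ℤ), 0, 0]
      = ![1, 0, 0, 0] := by
    rw [hM3, Dblock_mulVec]
    funext i
    fin_cases i <;> simp [hg3, hz3]
  have hNA : N *ᵥ A = ![1, 0, 0, 0] := by
    rw [hN, ← Matrix.mulVec_mulVec, ← Matrix.mulVec_mulVec, step1, step2, step3]
  refine ⟨spInv N, Sp4Z_spInv hNsp, ?_⟩
  have hid : spInv N *ᵥ (N *ᵥ A) = A := by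
    rw [Matrix.mulVec_mulVec, spInv_mul hNsp, Matrix.one_mulVec]
  rw [hNA] at hid
  intro i
  have hi := congrFun hid i
  have : spInv N i 0 = A i := by
    rw [← hi]
    simp [Matrix.mulVec, dotProduct, Fin.sum_univ_four, Matrix.vecHead, Matrix.vecTail]
  rw [this, hA]
  push_cast
  exact hcast i

section Reduction
variable (n : ℕ)

def red (M : Matrix (Fin 4) (Fin 4) ℤ) : Matrix (Fin 4) (Fin 4) (ZMod n) :=
  M.map (Int.castRingHom (ZMod n))

lemma red_mul (M N : Matrix (Fin 4) (Fin 4) ℤ) : red n (M * N) = red n M * red n N :=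
  Matrix.map_mul

lemma red_apply (M : Matrix (Fin 4) (Fin 4) ℤ) (i j : Fin 4) :
    red n M i j = ((M i j : ℤ) : ZMod n) := rfl

lemma red_J : red n (Jmat ℤ) = Jmat (ZMod n) := by
  apply Matrix.ext
  intro i j
  fin_cases i <;> fin_cases j <;>
    simp [red, Jmat, Matrix.vecHead, Matrix.vecTail]

lemma red_transpose (M : Matrix (Fin 4) (Fin 4) ℤ) : red n (Mᵀ) = (red n M)ᵀ :=
  Matrix.transpose_map

lemma red_sympl {M : Matrix (Fin 4) (Fin 4) ℤ} (h : M ∈ Sp4Z) :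
    (red n M)ᵀ * Jmat (ZMod n) * red n M = Jmat (ZMod n) := by
  calc (red n M)ᵀ * Jmat (ZMod n) * red n M
      = red n (Mᵀ * Jmat ℤ * M) := by rw [red_mul, red_mul, red_transpose, red_J]
  _ = red n (Jmat ℤ) := by rw [h]
  _ = Jmat (ZMod n) := red_J n

lemma mem_Hset_of_col {P : Matrix (Fin 4) (Fin 4) (ZMod n)}
    (hs : Pᵀ * Jmat (ZMod n) * P = Jmat (ZMod n))
    (h00 : P 0 0 = 1) (h10 : P 1 0 = 0) (h20 : P 2 0 = 0) (h30 : P 3 0 = 0) :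
    P ∈ Hset n := by
  have key : ∀ i, -(P 2 i) = Jmat (ZMod n) i 0 := by
    intro i
    have h := (sympl_iff P).mp hs i 0
    rw [h00, h10, h20, h30] at h
    linear_combination h
  have k1 := key 1
  have k2 := key 2
  have k3 := key 3
  simp [Jmat, Matrix.vecHead, Matrix.vecTail] at k1 k2 k3
  exact ⟨hs, h00, k2, h10, h20, h30, k1, k3⟩

lemma mem_GammaTilde1_iff (M : Matrix (Fin 4) (Fin 4) ℤ) :
    M ∈ GammaTilde1 n ↔ M ∈ Sp4Z ∧ red n M ∈ Hset n := by
  have c : ∀ x : ℤ, ((x : ZMod n) = 0 ↔ (n:ℤ) ∣ x) := fun x => ZMod.intCast_zmod_eq_zero_iff_dvd x n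
  constructor
  · rintro ⟨hsp, h1, h2, h3, h4, h5, h6, h7⟩
    refine ⟨hsp, red_sympl n hsp, ?_, ?_, ?_, ?_, ?_, ?_, ?_⟩ <;>
      rw [red_apply]
    · have := (c _).mpr h1
      push_cast at this
      exact sub_eq_zero.mp this
    · have := (c _).mpr h2
      push_cast at this
      exact sub_eq_zero.mp this
    · exact (c _).mpr h3
    · exact (c _).mpr h4
    · exact (c _).mpr h5
    · exact (c _).mpr h6
    · exact (c _).mpr h7
  · rintro ⟨hsp, hs, h1, h2, h3, h4, h5, h6, h7⟩
    rw [red_apply] at h1 h2 h3 h4 h5 h6 h7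
    refine ⟨hsp, ?_, ?_, (c _).mp h3, (c _).mp h4, (c _).mp h5, (c _).mp h6, (c _).mp h7⟩
    · apply (c _).mp
      push_cast
      rw [sub_eq_zero]
      exact h1
    · apply (c _).mp
      push_cast
      rw [sub_eq_zero]
      exact h2

end Reduction

section Cosets
variable (n : ℕ)

def colv (g : Matrix (Fin 4) (Fin 4) ℤ) : Fin 4 → ZMod n :=
  fun i => ((g i 0 : ℤ) : ZMod n)

lemma colv_eq_red (g : Matrix (Fin 4) (Fin 4) ℤ) (i : Fin 4) :
    colv n g i = red n g i 0 := rfl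

lemma red_one : red n 1 = 1 := Matrix.map_one _ (map_zero _) (map_one _)

lemma col_mul_right {P Q : Matrix (Fin 4) (Fin 4) (ZMod n)}
    (h0 : Q 0 0 = 1) (h1 : Q 1 0 = 0) (h2 : Q 2 0 = 0) (h3 : Q 3 0 = 0) (i : Fin 4) :
    (P * Q) i 0 = P i 0 := by
  rw [Matrix.mul_apply, Fin.sum_univ_four, h0, h1, h2, h3]
  ring

lemma colv_mul_mem {g h : Matrix (Fin 4) (Fin 4) ℤ} (hh : h ∈ GammaTilde1 n) :
    colv n (g * h) = colv n g := by
  obtain ⟨hsp, hH⟩ := (mem_GammaTilde1_iff n h).mp hh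
  funext i
  rw [colv_eq_red, colv_eq_red, red_mul]
  exact col_mul_right n hH.2.1 hH.2.2.2.1 hH.2.2.2.2.1 hH.2.2.2.2.2.1 i

lemma GammaTilde1_one : (1 : Matrix (Fin 4) (Fin 4) ℤ) ∈ GammaTilde1 n := by
  rw [mem_GammaTilde1_iff]
  refine ⟨Sp4Z_one, ?_⟩
  rw [red_one]
  exact mem_Hset_of_col n (by simp [Jmat]) (by simp) (by simp [Matrix.one_apply])
    (by simp [Matrix.one_apply]) (by simp [Matrix.one_apply])

lemma mem_coset_iff {g g' : Matrix (Fin 4) (Fin 4) ℤ} (hg : g ∈ Sp4Z) (hg' : g' ∈ Sp4Z) :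
    (∃ h ∈ GammaTilde1 n, g' = g * h) ↔ colv n g' = colv n g := by
  constructor
  · rintro ⟨h, hh, rfl⟩
    exact colv_mul_mem n hh
  · intro hcol
    have hcol' : ∀ j, red n g' j 0 = red n g j 0 := fun j => congrFun hcol j
    have hsp : spInv g * g' ∈ Sp4Z := Sp4Z_mul (Sp4Z_spInv hg) hg'
    have key : ∀ i, red n (spInv g * g') i 0
        = (1 : Matrix (Fin 4) (Fin 4) (ZMod n)) i 0 := by
      intro i
      rw [red_mul, Matrix.mul_apply]
      have hs : ∑ j, red n (spInv g) i j * red n g' j 0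
          = ∑ j, red n (spInv g) i j * red n g j 0 :=
        Finset.sum_congr rfl (fun j _ => by rw [hcol' j])
      rw [hs, ← Matrix.mul_apply, ← red_mul, spInv_mul hg, red_one]
    refine ⟨spInv g * g', ?_, ?_⟩
    · rw [mem_GammaTilde1_iff]
      refine ⟨hsp, mem_Hset_of_col n (red_sympl n hsp) ?_ ?_ ?_ ?_⟩
      · rw [key 0]; simp
      · rw [key 1]; simp [Matrix.one_apply]
      · rw [key 2]; simp [Matrix.one_apply]
      · rw [key 3]; simp [Matrix.one_apply]
    · rw [← mul_assoc, mul_spInv hg, one_mul]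

lemma colv_unimod {g : Matrix (Fin 4) (Fin 4) ℤ} (hg : g ∈ Sp4Z) : IsUnimod (colv n g) := by
  refine ⟨fun i => ((spInv g 0 i : ℤ) : ZMod n), ?_⟩
  have h1 : (spInv g * g) 0 0 = 1 := by rw [spInv_mul hg]; simp
  rw [Matrix.mul_apply, Fin.sum_univ_four] at h1
  have h2 := congrArg (Int.cast : ℤ → ZMod n) h1
  push_cast at h2
  rw [Fin.sum_univ_four]
  simpa [colv] using h2

noncomputable def cosetMap (C : leftCosets Sp4Z (GammaTilde1 n)) :
    {v : Fin 4 → ZMod n // IsUnimod v} :=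
  ⟨colv n C.2.choose, colv_unimod n C.2.choose_spec.1⟩

lemma cosetMap_eq (C : leftCosets Sp4Z (GammaTilde1 n)) {g : Matrix (Fin 4) (Fin 4) ℤ}
    (hC : C.1 = {x | ∃ h ∈ GammaTilde1 n, x = g * h}) : (cosetMap n C).1 = colv n g := by
  have hC0 := C.2.choose_spec.2
  have hgmem : g ∈ C.1 := by
    rw [hC]
    exact ⟨1, GammaTilde1_one n, (mul_one g).symm⟩
  rw [hC0] at hgmem
  obtain ⟨h, hh, rfl⟩ := hgmem
  exact (colv_mul_mem n hh).symm

lemma cosetMap_bijective (hn : 0 < n) : Function.Bijective (cosetMap n) := by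
  constructor
  · rintro C C' hCC
    have h1 := C.2.choose_spec
    have h2 := C'.2.choose_spec
    have hcol : colv n C.2.choose = colv n C'.2.choose := by
      have := congrArg Subtype.val hCC
      exact this
    apply Subtype.ext
    rw [h1.2, h2.2]
    ext x
    simp only [Set.mem_setOf_eq]
    constructor
    · rintro ⟨h, hh, rfl⟩
      apply (mem_coset_iff n h2.1
        (Sp4Z_mul h1.1 ((mem_GammaTilde1_iff n h).mp hh).1)).mpr
      rw [colv_mul_mem n hh, hcol]
    · rintro ⟨h, hh, rfl⟩
      apply (mem_coset_iff n h1.1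
        (Sp4Z_mul h2.1 ((mem_GammaTilde1_iff n h).mp hh).1)).mpr
      rw [colv_mul_mem n hh, hcol]
  · rintro ⟨v, hv⟩
    obtain ⟨g, hg, hcast⟩ := exists_sp_lift n hn v hv
    refine ⟨⟨{x | ∃ h ∈ GammaTilde1 n, x = g * h}, ⟨g, hg, rfl⟩⟩, ?_⟩
    apply Subtype.ext
    rw [cosetMap_eq n _ rfl]
    funext i
    exact hcast i

lemma card_cosets (hn : 0 < n) :
    Nat.card (leftCosets Sp4Z (GammaTilde1 n))
      = Nat.card {v : Fin 4 → ZMod n // IsUnimod v} :=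
  Nat.card_eq_of_bijective (cosetMap n) (cosetMap_bijective n hn)

end Cosets

theorem stmt_9 (n : ℕ) (hn : 0 < n) :
    Nat.card (Hset n) =
      n ^ 3 * Nat.card (Matrix.SpecialLinearGroup (Fin 2) (ZMod n)) ∧
    (Nat.card (Hset n) : ℚ) =
      (n : ℚ) ^ 6 * ∏ p ∈ n.primeFactors, (1 - ((p : ℚ))⁻¹ ^ 2) ∧
    (Nat.card (leftCosets Sp4Z (GammaTilde1 n)) : ℚ) =
      (n : ℚ) ^ 4 * ∏ p ∈ n.primeFactors, (1 - ((p : ℚ))⁻¹ ^ 4) := by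
  refine ⟨card_Hset_eq n hn, ?_, ?_⟩
  · rw [card_Hset_eq n hn, card_SL2 hn]
    push_cast
    rw [Ucard_eq 2 n hn]
    ring
  · rw [card_cosets n hn]
    have h4 : Nat.card {v : Fin 4 → ZMod n // IsUnimod v} = Ucard n 4 := rfl
    rw [h4, Ucard_eq 4 n hn]
end

section
/- The index in SL_2(Z/nZ) of the subgroup of matrices congruent to [[1,*],[0,1]] equals n^2 · ∏_{p | n, p prime} (1 - p^{-2}). -/
/-!
The subgroup is the stabilizer of the column vector `(1, 0)` for the action of `SL(2, ℤ/n)` on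
column vectors, so its index is the size of the orbit of `(1, 0)`, which consists of the pairs
`(a, c)` with `a u + c v = 1` for some `u, v`. Counting these pairs is multiplicative in `n`
by the Chinese remainder theorem. In the local ring `ℤ/p^e` such a pair is one with a unit
entry, and the non-units are the `p^(e-1)` multiples of `p`, which leaves
`p^(2e) - p^(2e-2) = p^(2e) (1 - p^(-2))` pairs.
-/

open Matrix Finset MatrixGroups

def coprimePairs (R : Type*) [CommSemiring R] : Set (R × R) := {x | IsCoprime x.1 x.2}

section Action

variable {R : Type*} [CommRing R]

lemma SL2_smul_vecCons_one_zero (g : SL(2, R)) : g • ![(1 : R), 0] = ![g 0 0, g 1 0] := by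
  ext i; fin_cases i <;> simp [Matrix.SpecialLinearGroup.smul_def]

lemma orbit_SL2_vecCons_one_zero :
    MulAction.orbit SL(2, R) ![(1 : R), 0] = piFinTwoEquiv (fun _ ↦ R) ⁻¹' coprimePairs R := by
  ext v
  simp only [MulAction.mem_orbit_iff, SL2_smul_vecCons_one_zero, Set.mem_preimage, coprimePairs,
    piFinTwoEquiv_apply, Set.mem_ofPred_eq]
  constructor
  · rintro ⟨g, rfl⟩
    simpa using g.isCoprime_col 0
  · intro h
    obtain ⟨g, h0, h1⟩ := h.exists_SL2_col 0
    exact ⟨g, by ext i; fin_cases i <;> simp [h0, h1]⟩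

lemma mem_stabilizer_SL2_vecCons_one_zero {g : SL(2, R)} :
    g ∈ MulAction.stabilizer SL(2, R) ![(1 : R), 0] ↔
      g 0 0 = 1 ∧ g 1 1 = 1 ∧ g 1 0 = 0 := by
  have hdet : g 0 0 * g 1 1 - g 0 1 * g 1 0 = 1 := by
    rw [← det_fin_two, g.det_coe]
  rw [MulAction.mem_stabilizer_iff, SL2_smul_vecCons_one_zero]
  constructor
  · intro h
    have h0 : g 0 0 = 1 := by simpa using congrFun h 0
    have h1 : g 1 0 = 0 := by simpa using congrFun h 1
    exact ⟨h0, by simpa [h0, h1] using hdet, h1⟩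
  · rintro ⟨h0, -, h1⟩
    ext i; fin_cases i <;> simp [h0, h1]

end Action

section Counting

variable {R S : Type*} [CommRing R] [CommRing S]

lemma isCoprime_map_ringEquiv_iff (e : R ≃+* S) {a b : R} :
    IsCoprime (e a) (e b) ↔ IsCoprime a b :=
  ⟨fun h ↦ by simpa using h.map e.symm.toRingHom, fun h ↦ h.map e.toRingHom⟩

lemma Prod.isCoprime_iff {x y : R × S} :
    IsCoprime x y ↔ IsCoprime x.1 y.1 ∧ IsCoprime x.2 y.2 := by
  constructor
  · rintro ⟨u, v, h⟩
    exact ⟨⟨u.1, v.1, congrArg Prod.fst h⟩, ⟨u.2, v.2, congrArg Prod.snd h⟩⟩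
  · rintro ⟨⟨u₁, v₁, h₁⟩, ⟨u₂, v₂, h₂⟩⟩
    exact ⟨(u₁, u₂), (v₁, v₂), Prod.ext h₁ h₂⟩

lemma ncard_coprimePairs_congr (e : R ≃+* S) :
    (coprimePairs R).ncard = (coprimePairs S).ncard :=
  Set.ncard_congr' <| (e.toEquiv.prodCongr e.toEquiv).subtypeEquiv fun _ ↦
    (isCoprime_map_ringEquiv_iff e).symm

lemma ncard_coprimePairs_prod :
    (coprimePairs (R × S)).ncard = (coprimePairs R).ncard * (coprimePairs S).ncard := by
  rw [← Set.ncard_prod]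
  exact Set.ncard_congr' <| (Equiv.prodProdProdComm R S R S).subtypeEquiv fun _ ↦
    Prod.isCoprime_iff

lemma IsLocalRing.isCoprime_iff [IsLocalRing R] {a b : R} :
    IsCoprime a b ↔ IsUnit a ∨ IsUnit b := by
  constructor
  · rintro ⟨u, v, h⟩
    exact (isUnit_or_isUnit_of_add_one h).imp isUnit_of_mul_isUnit_right
      isUnit_of_mul_isUnit_right
  · rintro (ha | hb)
    · exact isCoprime_one_left.of_isCoprime_of_dvd_left ha.dvd
    · exact isCoprime_one_right.of_isCoprime_of_dvd_right hb.dvd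

lemma IsLocalRing.coprimePairs_eq_compl [IsLocalRing R] :
    coprimePairs R = (nonunits R ×ˢ nonunits R)ᶜ := by
  ext x
  simp [coprimePairs, IsLocalRing.isCoprime_iff, mem_nonunits_iff, or_iff_not_and_not]

lemma IsLocalRing.ncard_coprimePairs_add [IsLocalRing R] [Finite R] :
    (coprimePairs R).ncard + (nonunits R).ncard ^ 2 = Nat.card R ^ 2 := by
  rw [coprimePairs_eq_compl, sq, ← Set.ncard_prod, add_comm, Set.ncard_add_ncard_compl,
    Nat.card_prod, sq]

lemma ncard_nonunits_add_card_units [Finite R] :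
    (nonunits R).ncard + Nat.card Rˣ = Nat.card R := by
  have : (nonunits R)ᶜ = Set.range ((↑) : Rˣ → R) := by
    ext; simp [mem_nonunits_iff, IsUnit]
  rw [← Set.ncard_range_of_injective Units.val_injective, ← this, Set.ncard_add_ncard_compl]

end Counting

namespace ZMod

variable {p e : ℕ}

lemma isLocalRing_prime_pow (hp : p.Prime) (he : 0 < e) : IsLocalRing (ZMod (p ^ e)) := by
  have : Fact (1 < p ^ e) := ⟨Nat.one_lt_pow he.ne' hp.one_lt⟩
  have mem_nonunits (a : ZMod (p ^ e)) : a ∈ nonunits _ ↔ p ∣ a.val := by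
    conv_lhs => rw [← natCast_zmod_val a]
    rw [mem_nonunits_iff, isUnit_natCast_iff_not_dvd_pow hp he, not_not]
  refine IsLocalRing.of_nonunits_add fun a b ha hb ↦ ?_
  rw [mem_nonunits] at ha hb ⊢
  rw [val_add, Nat.dvd_mod_iff (dvd_pow_self p he.ne')]
  exact dvd_add ha hb

lemma ncard_nonunits_prime_pow (hp : p.Prime) (he : 0 < e) :
    (nonunits (ZMod (p ^ e))).ncard = p ^ (e - 1) := by
  have : NeZero (p ^ e) := ⟨pow_ne_zero e hp.ne_zero⟩
  have h := ncard_nonunits_add_card_units (R := ZMod (p ^ e))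
  rw [Nat.card_eq_fintype_card, card_units_eq_totient, Nat.card_zmod,
    Nat.totient_prime_pow hp he] at h
  have hpe : p ^ e = p ^ (e - 1) * (p - 1) + p ^ (e - 1) := by
    rw [← Nat.mul_succ, Nat.succ_eq_add_one, Nat.sub_add_cancel hp.one_le, ← pow_succ,
      Nat.sub_add_cancel he]
  omega

lemma ncard_coprimePairs_prime_pow (hp : p.Prime) (he : 0 < e) :
    ((coprimePairs (ZMod (p ^ e))).ncard : ℚ) =
      ((p ^ e : ℕ) : ℚ) ^ 2 * (1 - (p : ℚ)⁻¹ ^ 2) := by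
  have : NeZero (p ^ e) := ⟨pow_ne_zero e hp.ne_zero⟩
  have := isLocalRing_prime_pow hp he
  have h := IsLocalRing.ncard_coprimePairs_add (R := ZMod (p ^ e))
  rw [ncard_nonunits_prime_pow hp he, Nat.card_zmod] at h
  have hp0 : (p : ℚ) ≠ 0 := by exact_mod_cast hp.ne_zero
  have hpe : (p : ℚ) ^ e = p ^ (e - 1) * p := by rw [← pow_succ, Nat.sub_add_cancel he]
  have hQ : ((coprimePairs (ZMod (p ^ e))).ncard : ℚ) + ((p : ℚ) ^ (e - 1)) ^ 2
      = ((p : ℚ) ^ e) ^ 2 := by exact_mod_cast h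
  rw [eq_sub_of_add_eq hQ]
  push_cast
  rw [hpe]
  field_simp

end ZMod

lemma ncard_coprimePairs_zmod {n : ℕ} (hn : 0 < n) :
    ((coprimePairs (ZMod n)).ncard : ℚ) =
      (n : ℚ) ^ 2 * ∏ p ∈ n.primeFactors, (1 - (p : ℚ)⁻¹ ^ 2) := by
  induction n using Nat.recOnPosPrimePosCoprime with
  | zero => exact absurd hn (lt_irrefl 0)
  | one =>
    have : coprimePairs (ZMod 1) = .univ :=
      Set.eq_univ_of_forall fun _ ↦ ⟨0, 0, Subsingleton.elim _ _⟩
    simp [this]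
  | prime_pow p e hp he =>
    rw [ZMod.ncard_coprimePairs_prime_pow hp he, Nat.primeFactors_prime_pow he.ne' hp,
      prod_singleton]
  | coprime a b ha hb hab iha ihb =>
    rw [ncard_coprimePairs_congr (ZMod.chineseRemainder hab), ncard_coprimePairs_prod,
      Nat.cast_mul, iha (by omega), ihb (by omega), hab.primeFactors_mul,
      prod_union hab.disjoint_primeFactors]
    push_cast
    ring

theorem stmt_10 (n : ℕ) (hn : 0 < n)
    (H : Subgroup (Matrix.SpecialLinearGroup (Fin 2) (ZMod n)))
    (hH : (H : Set (Matrix.SpecialLinearGroup (Fin 2) (ZMod n))) =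
      {M | M.1 0 0 = 1 ∧ M.1 1 1 = 1 ∧ M.1 1 0 = 0}) :
    (H.index : ℚ) = (n : ℚ) ^ 2 * ∏ p ∈ n.primeFactors, (1 - ((p : ℚ))⁻¹ ^ 2) := by
  have hstab : H = MulAction.stabilizer SL(2, ZMod n) ![(1 : ZMod n), 0] :=
    SetLike.ext' <| hH.trans <| Set.ext fun _ ↦ mem_stabilizer_SL2_vecCons_one_zero.symm
  rw [hstab, MulAction.index_stabilizer, orbit_SL2_vecCons_one_zero,
    Set.ncard_preimage_of_injective_subset_range (Equiv.injective _)
      ((Equiv.surjective _).range_eq ▸ Set.subset_univ _),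
    ncard_coprimePairs_zmod hn]
end
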